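/- arXiv:hep-th/9711139 — 2 statements merged into one kernel-verified Lean document; each statement's English description precedes it below -/
import Mathlib

section
/- If ρ > 0, ρ' > 0 and ρ ≠ ρ', then the measures μ_ρ and μ_{ρ'} on ℝ^ℕ are mutually singular (i.e., they have disjoint supports: there is a measurable set carrying all of μ_ρ whose complement carries all of μ_{ρ'}). -/
open MeasureTheory ProbabilityTheory
open scoped NNReal ENNReal

/-- A measure `μ` on `ℝ^ℕ` (with the product σ-algebra) is the countable product of
identical Gaussian measures of mean `0` and variance `ρ` iff all its finite-dimensional
marginals are the corresponding products of Gaussians. -/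
def IsProductGaussian (ρ : ℝ≥0) (μ : Measure (ℕ → ℝ)) : Prop :=
  ∀ (s : Finset ℕ) (A : ℕ → Set ℝ), (∀ i ∈ s, MeasurableSet (A i)) →
    μ {x : ℕ → ℝ | ∀ i ∈ s, x i ∈ A i} = ∏ i ∈ s, gaussianReal 0 ρ (A i)

/-!
By the strong law of large numbers, applied to the i.i.d. squares `x i ^ 2` of mean `ρ`,
the empirical second moment `(∑ i < n, x i ^ 2) / n` tends to `ρ` for `μ_ρ`-almost every `x`.
The set of sequences whose empirical second moment tends to `ρ'` therefore carries `μ_ρ'`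
and is `μ_ρ`-null.
-/

open Filter Topology

lemma integral_sq_gaussianReal (v : ℝ≥0) : ∫ x, x ^ 2 ∂gaussianReal 0 v = v :=
  (variance_of_integral_eq_zero aemeasurable_id' integral_id_gaussianReal).symm.trans
    variance_fun_id_gaussianReal

lemma integrable_sq_gaussianReal (m : ℝ) (v : ℝ≥0) :
    Integrable (fun x ↦ x ^ 2) (gaussianReal m v) :=
  (memLp_id_gaussianReal 2).integrable_sq

lemma MeasureTheory.Measure.mutuallySingular_of_ae_tendsto {α : Type*} [MeasurableSpace α]
    {μ ν : Measure α} {f : ℕ → α → ℝ} (hf : ∀ n, Measurable (f n)) {a b : ℝ} (hab : a ≠ b)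
    (hμ : ∀ᵐ x ∂μ, Tendsto (f · x) atTop (𝓝 a)) (hν : ∀ᵐ x ∂ν, Tendsto (f · x) atTop (𝓝 b)) :
    μ ⟂ₘ ν := by
  refine ⟨{x | Tendsto (f · x) atTop (𝓝 b)}, measurableSet_tendsto _ hf, ?_, ae_iff.mp hν⟩
  exact measure_mono_null (fun x hxb hxa ↦ hab (tendsto_nhds_unique hxa hxb)) (ae_iff.mp hμ)

namespace IsProductGaussian

variable {ρ : ℝ≥0} {μ : Measure (ℕ → ℝ)}

lemma measure_eval_preimage (hμ : IsProductGaussian ρ μ) (i : ℕ) {A : Set ℝ}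
    (hA : MeasurableSet A) : μ ((fun x ↦ x i) ⁻¹' A) = gaussianReal 0 ρ A := by
  simpa [Set.preimage] using hμ {i} (fun _ ↦ A) (fun _ _ ↦ hA)

lemma map_eval (hμ : IsProductGaussian ρ μ) (i : ℕ) :
    μ.map (fun x ↦ x i) = gaussianReal 0 ρ := by
  ext A hA
  rw [Measure.map_apply (measurable_pi_apply i) hA, hμ.measure_eval_preimage i hA]

lemma iIndepFun_eval (hμ : IsProductGaussian ρ μ) : iIndepFun (fun i (x : ℕ → ℝ) ↦ x i) μ := by
  rw [iIndepFun_iff_measure_inter_preimage_eq_mul]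
  intro S A hA
  have hcyl : ⋂ i ∈ S, (fun x : ℕ → ℝ ↦ x i) ⁻¹' A i = {x | ∀ i ∈ S, x i ∈ A i} := by
    ext x; simp
  rw [hcyl, hμ S A hA]
  exact Finset.prod_congr rfl fun i hi ↦ (hμ.measure_eval_preimage i (hA i hi)).symm

lemma ae_tendsto_mean_sq (hμ : IsProductGaussian ρ μ) :
    ∀ᵐ x ∂μ, Tendsto (fun n : ℕ ↦ (∑ i ∈ Finset.range n, x i ^ 2) / (n : ℝ)) atTop
      (𝓝 (ρ : ℝ)) := by
  have hsq : Measurable fun t : ℝ ↦ t ^ 2 := measurable_id.pow_const 2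
  have hident : ∀ i, IdentDistrib (fun x : ℕ → ℝ ↦ x i) (fun x ↦ x 0) μ μ := fun i ↦
    ⟨(measurable_pi_apply i).aemeasurable, (measurable_pi_apply 0).aemeasurable,
      by rw [hμ.map_eval, hμ.map_eval]⟩
  have hint : Integrable (fun x : ℕ → ℝ ↦ x 0 ^ 2) μ := by
    refine (integrable_map_measure hsq.aestronglyMeasurable
      (measurable_pi_apply 0).aemeasurable).mp ?_
    rw [hμ.map_eval]
    exact integrable_sq_gaussianReal 0 ρ
  have hmean : ∫ x, x 0 ^ 2 ∂μ = ρ := by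
    rw [← integral_sq_gaussianReal ρ, ← hμ.map_eval 0,
      integral_map (measurable_pi_apply 0).aemeasurable hsq.aestronglyMeasurable]
  simpa only [hmean] using strong_law_ae_real (fun i (x : ℕ → ℝ) ↦ x i ^ 2) hint
    (fun i j hij ↦ (hμ.iIndepFun_eval.indepFun hij).comp hsq hsq)
    (fun i ↦ (hident i).comp hsq)

end IsProductGaussian

theorem gaussian_product_measures_mutuallySingular_general (ρ ρ' : ℝ≥0)
    (hne : ρ ≠ ρ') (μ μ' : Measure (ℕ → ℝ))
    (hμ : IsProductGaussian ρ μ) (hμ' : IsProductGaussian ρ' μ') :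
    μ ⟂ₘ μ' :=
  Measure.mutuallySingular_of_ae_tendsto
    (fun _ ↦ (Finset.measurable_sum _ fun i _ ↦ (measurable_pi_apply i).pow_const 2).div_const _)
    (NNReal.coe_injective.ne hne) hμ.ae_tendsto_mean_sq hμ'.ae_tendsto_mean_sq

/-- Product Gaussian measures with different variances are mutually singular. -/
theorem gaussian_product_measures_mutuallySingular (ρ ρ' : ℝ≥0) (hρ : 0 < ρ) (hρ' : 0 < ρ')
    (hne : ρ ≠ ρ') (μ μ' : Measure (ℕ → ℝ))
    (hμ : IsProductGaussian ρ μ) (hμ' : IsProductGaussian ρ' μ') :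
    μ ⟂ₘ μ' :=
  gaussian_product_measures_mutuallySingular_general ρ ρ' hne μ μ' hμ hμ'
end

section
/- Let 0 < ρ' < ρ and ε > 0. Define S₂ := { x ∈ ℝ^ℕ : there exists N ≥ 2 such that |x_n| < √(2(1+ε)ρ·ln n) for all n ≥ N } and S₁ := { x ∈ ℝ^ℕ : there exists N ≥ 2 such that |x_n| < √(2ρ·ln n) for all n ≥ N }. Then the difference set A := S₂ \ S₁ satisfies μ_ρ(A) = 1 and μ_{ρ'}(A) = 0. -/
/-!
Write `E a n = {x | √(2 a log n) ≤ |x n|}`, so that `{x | ∃ N, ∀ n ≥ N, |x n| < √(2 a log n)}` is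
the complement of `limsup (E a)`. Under the product of centred Gaussians of variance `v` the events
`E a n` are independent; the Chernoff bound gives `P(E a n) ≤ 2 n^(-a/v)`, and comparing the density
with its value at `t + 1/t` on `[t, t + 1/t]` gives `P(E v n) ≳ 1 / (n √(log n))`. By Borel–Cantelli,
`limsup (E a)` is null for `a > v`, while `limsup (E v)` is full because `∑ 1 / (n √(log n))`
diverges (Cauchy condensation). Hence `S₂ \ S₁ = limsup (E ρ) \ limsup (E ((1 + ε) ρ))` is full for
`μ_ρ` and null for `μ_ρ'`.
-/

open MeasureTheory ProbabilityTheory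
open scoped NNReal ENNReal

open Filter Real

lemma hasSubgaussianMGF_id_gaussianReal (v : ℝ≥0) :
    HasSubgaussianMGF id v (gaussianReal 0 v) where
  integrable_exp_mul := integrable_exp_mul_gaussianReal
  mgf_le t := by rw [mgf_gaussianReal (μ := 0) (v := v) Measure.map_id]; simp

lemma gaussianReal_real_le_abs_le (v : ℝ≥0) {t : ℝ} (ht : 0 ≤ t) :
    (gaussianReal 0 v).real {x | t ≤ |x|} ≤ 2 * exp (-t ^ 2 / (2 * v)) := by
  have h := hasSubgaussianMGF_id_gaussianReal v
  have hsplit : {x : ℝ | t ≤ |x|} = {x | t ≤ id x} ∪ {x | t ≤ (-id) x} := by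
    ext x; simp only [le_abs', Set.mem_ofPred_eq, Set.mem_union, id, Pi.neg_apply, le_neg]; tauto
  grw [hsplit, measureReal_union_le, h.measure_ge_le ht, h.neg.measure_ge_le ht]
  linarith

lemma le_gaussianReal_real_le_abs {v : ℝ≥0} (hv : v ≠ 0) {t : ℝ} (ht : 1 ≤ t) :
    exp (-(t ^ 2 + 3) / (2 * v)) / (√(2 * π * v) * t) ≤ (gaussianReal 0 v).real {x | t ≤ |x|} := by
  have ht0 : 0 < t := one_pos.trans_le ht
  have hsub : Set.Icc t (t + t⁻¹) ⊆ {x | t ≤ |x|} := fun x hx => hx.1.trans (le_abs_self x)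
  have hpdf : ∀ x ∈ Set.Icc t (t + t⁻¹),
      (√(2 * π * v))⁻¹ * exp (-(t ^ 2 + 3) / (2 * v)) ≤ gaussianPDFReal 0 v x := by
    rintro x ⟨htx, hxt⟩
    rw [gaussianPDFReal, sub_zero]
    gcongr
    have hinv : t⁻¹ ≤ 1 := inv_le_one_of_one_le₀ ht
    have : t * t⁻¹ = 1 := mul_inv_cancel₀ ht0.ne'
    nlinarith
  calc exp (-(t ^ 2 + 3) / (2 * v)) / (√(2 * π * v) * t)
      = ∫ _ in Set.Icc t (t + t⁻¹), (√(2 * π * v))⁻¹ * exp (-(t ^ 2 + 3) / (2 * v)) := by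
        rw [setIntegral_const, Real.volume_real_Icc_of_le (by linarith [inv_pos.mpr ht0]),
          smul_eq_mul]
        field_simp
        ring
    _ ≤ ∫ x in Set.Icc t (t + t⁻¹), gaussianPDFReal 0 v x :=
        setIntegral_mono_on (integrableOn_const (by simp))
          (integrable_gaussianPDFReal 0 v).integrableOn measurableSet_Icc hpdf
    _ = (gaussianReal 0 v).real (Set.Icc t (t + t⁻¹)) := by
        rw [measureReal_def, gaussianReal_apply_eq_integral 0 hv,
          ENNReal.toReal_ofReal (setIntegral_nonneg measurableSet_Icc fun x _ =>
            gaussianPDFReal_nonneg 0 v x)]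
    _ ≤ _ := measureReal_mono hsub

lemma gaussianReal_real_sqrt_log_le_abs_le (v : ℝ≥0) {a : ℝ} (ha : 0 ≤ a) {n : ℕ} (hn : 0 < n) :
    (gaussianReal 0 v).real {x | √(2 * a * log n) ≤ |x|} ≤ 2 * (n : ℝ) ^ (-(a / v)) := by
  have hlog : 0 ≤ 2 * a * log n := by have := log_natCast_nonneg n; positivity
  refine (gaussianReal_real_le_abs_le v (sqrt_nonneg _)).trans_eq ?_
  rw [sq_sqrt hlog, rpow_def_of_pos (by exact_mod_cast hn)]
  ring_nf

lemma le_gaussianReal_real_sqrt_log_le_abs {v : ℝ≥0} (hv : v ≠ 0) {n : ℕ}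
    (hn : 1 ≤ 2 * v * log n) :
    exp (-3 / (2 * v)) / (√(2 * π * v) * √(2 * v)) * (n * √(log n))⁻¹ ≤
      (gaussianReal 0 v).real {x | √(2 * v * log n) ≤ |x|} := by
  have hlog : 0 < log n := pos_of_mul_pos_right (one_pos.trans_le hn) (by positivity)
  have hn0 : (0 : ℝ) < n := Nat.cast_pos.mpr <| Nat.pos_of_ne_zero fun h => by simp [h] at hlog
  refine Eq.trans_le ?_ (le_gaussianReal_real_le_abs hv (one_le_sqrt.mpr hn))
  have hexp : exp (-(2 * v * log n + 3) / (2 * v)) = (n : ℝ)⁻¹ * exp (-3 / (2 * v)) := by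
    rw [← exp_log hn0, ← exp_neg, ← exp_add, log_exp]
    congr 1
    field_simp
    ring
  rw [sq_sqrt (by linarith), sqrt_mul (by positivity), hexp]
  field_simp
  exact sqrt_mul (by positivity) _

lemma Real.not_summable_inv_mul_sqrt_log : ¬ Summable fun n : ℕ => ((n : ℝ) * √(log n))⁻¹ := by
  have hmono : ∀ᶠ k : ℕ in atTop,
      ((((k + 1 : ℕ) : ℝ) * √(log (k + 1 : ℕ)))⁻¹) ≤ ((k : ℝ) * √(log k))⁻¹ := by
    filter_upwards [eventually_ge_atTop 2] with k hk
    have hk1 : (1 : ℝ) < k := by exact_mod_cast hk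
    have : 0 < log (k : ℝ) := log_pos hk1
    gcongr <;> linarith
  rw [← summable_condensed_iff_of_eventually_nonneg (Eventually.of_forall fun n => by positivity)
    hmono]
  have hcond : (fun k : ℕ => (2 : ℝ) ^ k * (((2 ^ k : ℕ) : ℝ) * √(log ((2 ^ k : ℕ) : ℝ)))⁻¹) =
      fun k : ℕ => (√(log 2))⁻¹ * (k : ℝ) ^ (-(1 / 2 : ℝ)) := by
    ext k
    have : (2 : ℝ) ^ k ≠ 0 := by positivity
    rw [Nat.cast_pow, Nat.cast_ofNat, log_pow, sqrt_mul (Nat.cast_nonneg k), sqrt_eq_rpow,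
      rpow_neg (Nat.cast_nonneg k)]
    field_simp
  rw [hcond, summable_mul_left_iff (by positivity), summable_nat_rpow]
  norm_num

lemma tsum_measure_ne_top_iff_summable_measureReal {ι α : Type*} [MeasurableSpace α]
    {μ : Measure α} [IsFiniteMeasure μ] {s : ι → Set α} :
    ∑' i, μ (s i) ≠ ∞ ↔ Summable fun i => μ.real (s i) := by
  refine ⟨ENNReal.summable_toReal, fun h => ?_⟩
  rw [tsum_congr fun i => (ofReal_measureReal (μ := μ) (s := s i)).symm,
    ← ENNReal.ofReal_tsum_of_nonneg (fun _ => measureReal_nonneg) h]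
  exact ENNReal.ofReal_ne_top

def exceedsSqrtLog (a : ℝ) (n : ℕ) : Set (ℕ → ℝ) := {x | √(2 * a * log n) ≤ |x n|}

lemma measurableSet_exceedsSqrtLog (a : ℝ) (n : ℕ) : MeasurableSet (exceedsSqrtLog a n) :=
  measurableSet_le measurable_const (measurable_pi_apply n).abs

lemma setOf_eventually_abs_lt_sqrt_log_eq_compl_limsup (a : ℝ) :
    {x : ℕ → ℝ | ∃ N : ℕ, 2 ≤ N ∧ ∀ n ≥ N, |x n| < √(2 * a * log n)} =
      (limsup (exceedsSqrtLog a) atTop)ᶜ := by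
  ext x
  simp only [Set.mem_ofPred_eq, Set.mem_compl_iff, mem_limsup_iff_frequently_mem, exceedsSqrtLog,
    not_frequently, not_le, eventually_atTop]
  constructor
  · rintro ⟨N, -, hN⟩
    exact ⟨N, hN⟩
  · rintro ⟨N, hN⟩
    exact ⟨max N 2, le_max_right _ _, fun n hn => hN n ((le_max_left _ _).trans hn)⟩

namespace IsProductGaussian

variable {v : ℝ≥0} {μ : Measure (ℕ → ℝ)}

lemma isProbabilityMeasure (hμ : IsProductGaussian v μ) : IsProbabilityMeasure μ :=
  ⟨by simpa using hμ ∅ (fun _ => Set.univ) (by simp)⟩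

lemma measure_preimage_eval (hμ : IsProductGaussian v μ) {n : ℕ} {A : Set ℝ}
    (hA : MeasurableSet A) : μ ((fun x => x n) ⁻¹' A) = gaussianReal 0 v A := by
  simpa [Set.preimage] using hμ {n} (fun _ => A) (by simp [hA])

lemma iIndepSet_preimage_eval (hμ : IsProductGaussian v μ) {A : ℕ → Set ℝ}
    (hA : ∀ n, MeasurableSet (A n)) : iIndepSet (fun n => (fun x : ℕ → ℝ => x n) ⁻¹' A n) μ := by
  rw [iIndepSet_iff_meas_biInter fun n => measurable_pi_apply n (hA n)]
  intro s
  have hinter : ⋂ i ∈ s, (fun x : ℕ → ℝ => x i) ⁻¹' A i = {x | ∀ i ∈ s, x i ∈ A i} := by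
    ext x; simp
  rw [hinter, hμ s A fun i _ => hA i]
  exact Finset.prod_congr rfl fun i _ => (hμ.measure_preimage_eval (hA i)).symm

lemma measureReal_exceedsSqrtLog (hμ : IsProductGaussian v μ) (a : ℝ) (n : ℕ) :
    μ.real (exceedsSqrtLog a n) = (gaussianReal 0 v).real {y | √(2 * a * log n) ≤ |y|} := by
  rw [measureReal_def, measureReal_def, exceedsSqrtLog,
    ← hμ.measure_preimage_eval (measurableSet_le measurable_const measurable_abs)]
  rfl

lemma measure_limsup_exceedsSqrtLog_eq_zero (hμ : IsProductGaussian v μ) (hv : v ≠ 0) {a : ℝ}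
    (hva : v < a) : μ (limsup (exceedsSqrtLog a) atTop) = 0 := by
  have := hμ.isProbabilityMeasure
  refine measure_limsup_atTop_eq_zero (tsum_measure_ne_top_iff_summable_measureReal.mpr ?_)
  have hp : -(a / v) < -1 := by
    rw [neg_lt_neg_iff, one_lt_div (by positivity)]
    exact hva
  refine ((summable_nat_rpow.mpr hp).mul_left 2).of_norm_bounded_eventually_nat ?_
  filter_upwards [eventually_gt_atTop 0] with n hn
  rw [norm_of_nonneg measureReal_nonneg, hμ.measureReal_exceedsSqrtLog]
  exact gaussianReal_real_sqrt_log_le_abs_le v (v.2.trans hva.le) hn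

lemma measure_limsup_exceedsSqrtLog_self_eq_one (hμ : IsProductGaussian v μ) (hv : v ≠ 0) :
    μ (limsup (exceedsSqrtLog v) atTop) = 1 := by
  have := hμ.isProbabilityMeasure
  refine measure_limsup_eq_one (measurableSet_exceedsSqrtLog v)
    (hμ.iIndepSet_preimage_eval (A := fun n => {y | √(2 * v * log n) ≤ |y|})
      fun _ => measurableSet_le measurable_const measurable_abs) ?_
  rw [← not_ne_iff, tsum_measure_ne_top_iff_summable_measureReal]
  intro hsum
  have hC : 0 < exp (-3 / (2 * v)) / (√(2 * π * v) * √(2 * v)) := by positivity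
  refine not_summable_inv_mul_sqrt_log
    ((summable_mul_left_iff hC.ne').mp (hsum.of_norm_bounded_eventually_nat ?_))
  have hlog : Tendsto (fun n : ℕ => 2 * v * log n) atTop atTop :=
    (tendsto_log_atTop.comp tendsto_natCast_atTop_atTop).const_mul_atTop (by positivity)
  filter_upwards [hlog.eventually_ge_atTop 1] with n hn
  rw [norm_of_nonneg (by positivity), hμ.measureReal_exceedsSqrtLog]
  exact le_gaussianReal_real_sqrt_log_le_abs hv hn

end IsProductGaussian

/-- The difference set `S₂ \ S₁` has `μ_ρ`-measure one and `μ_{ρ'}`-measure zero,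
for `0 < ρ' < ρ` and any `ε > 0`. -/
theorem gaussian_product_measure_difference_set (ρ ρ' : ℝ≥0) (hρ' : 0 < ρ') (hρ : ρ' < ρ)
    (ε : ℝ) (hε : 0 < ε) (μ μ' : Measure (ℕ → ℝ))
    (hμ : IsProductGaussian ρ μ) (hμ' : IsProductGaussian ρ' μ') :
    μ ({x : ℕ → ℝ | ∃ N : ℕ, 2 ≤ N ∧
          ∀ n ≥ N, |x n| < Real.sqrt (2 * (1 + ε) * ρ * Real.log n)} \
       {x : ℕ → ℝ | ∃ N : ℕ, 2 ≤ N ∧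
          ∀ n ≥ N, |x n| < Real.sqrt (2 * ρ * Real.log n)}) = 1 ∧
    μ' ({x : ℕ → ℝ | ∃ N : ℕ, 2 ≤ N ∧
          ∀ n ≥ N, |x n| < Real.sqrt (2 * (1 + ε) * ρ * Real.log n)} \
       {x : ℕ → ℝ | ∃ N : ℕ, 2 ≤ N ∧
          ∀ n ≥ N, |x n| < Real.sqrt (2 * ρ * Real.log n)}) = 0 := by
  have hρ0 : ρ ≠ 0 := (hρ'.trans hρ).ne'
  have hρε : (ρ : ℝ) < (1 + ε) * ρ := by
    have : (0 : ℝ) < ρ := by positivity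
    nlinarith
  simp_rw [mul_assoc 2 (1 + ε), setOf_eventually_abs_lt_sqrt_log_eq_compl_limsup, compl_sdiff_compl]
  refine ⟨?_, ?_⟩
  · rw [measure_sdiff_null (hμ.measure_limsup_exceedsSqrtLog_eq_zero hρ0 hρε),
      hμ.measure_limsup_exceedsSqrtLog_self_eq_one hρ0]
  · exact measure_mono_null Set.sdiff_subset
      (hμ'.measure_limsup_exceedsSqrtLog_eq_zero hρ'.ne' (by exact_mod_cast hρ))
end
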